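/- Let a, b : ℕ → ℂ satisfy a(0) = b(0) = 0, a(1) = b(1) = 1, and be multiplicative, i.e. a(mn) = a(m)·a(n) and b(mn) = b(m)·b(n) for all coprime m, n ≥ 1. Assume that for every prime q there exist α_q, β_q, α'_q, β'_q ∈ ℂ with a(q^n) = h_n(α_q,β_q) and b(q^n) = h_n(α'_q,β'_q) for all n ≥ 0. Let s ∈ ℂ be such that ∑_{n≥1} |a(n)·b(n)|·n^{−Re(s)} < ∞ and such that max(|α_qα'_q|, |α_qβ'_q|, |β_qα'_q|, |β_qβ'_q|) < q^{Re(s)} for every prime q. Then ∑_{n≥1} a(n)·b(n)·n^{−s} = ∏_{q prime} (1 − α_qβ_qα'_qβ'_q·q^{−2s}) · [(1 − α_qα'_q·q^{−s})(1 − α_qβ'_q·q^{−s})(1 − β_qα'_q·q^{−s})(1 − β_qβ'_q·q^{−s})]^{−1}, where each of the four linear factors at each prime q is nonzero and the product over all primes q converges. -/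

import Mathlib

/-!
By absolute convergence and multiplicativity, the Dirichlet series is the Euler product of its
local series `∑ₑ a(qᵉ) b(qᵉ) xᵉ` with `x = q^{-s}`. Since `h_{n+2} = (α+β) h_{n+1} - αβ hₙ`, the
sequences `hₙ(xα, xβ)` and `hₙ(α', β')` satisfy second-order linear recurrences, and their
product satisfies the fourth-order recurrence whose characteristic roots are the four products
`xαα', xαβ', xβα', xββ'`. Summing that recurrence over `n` shows that the local series times
`∏ (1 - root)` equals its first four terms corrected by the recurrence, which collapse to
`1 - αβα'β'x²`.
-/

open Finset

noncomputable def hSym (n : ℕ) (α β : ℂ) : ℂ :=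
  ∑ i ∈ Finset.range (n + 1), α ^ i * β ^ (n - i)

theorem LinearRecurrence.one_sub_sum_coeffs_mul_tsum {R : Type*} [CommRing R]
    [TopologicalSpace R] [IsTopologicalRing R] [T2Space R] (E : LinearRecurrence R)
    {u : ℕ → R} (hu : E.IsSolution u) (hsum : Summable u) :
    (1 - ∑ i, E.coeffs i) * ∑' n, u n =
      ∑ j ∈ range E.order, u j - ∑ i, E.coeffs i * ∑ j ∈ range i, u j := by
  have hshift (k : ℕ) : ∑' n, u (n + k) = ∑' n, u n - ∑ j ∈ range k, u j := by
    rw [← hsum.sum_add_tsum_nat_add k]; ring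
  have hshift_summable (k : ℕ) : Summable fun n => u (n + k) := (summable_nat_add_iff k).2 hsum
  have hsummed : ∑' n, u (n + E.order) = ∑ i, E.coeffs i * ∑' n, u (n + i) := by
    rw [tsum_congr hu, Summable.tsum_finsetSum (f := fun i n => E.coeffs i * u (n + i))
      fun i _ => (hshift_summable i).mul_left _]
    exact sum_congr rfl fun i _ => (hshift_summable i).tsum_mul_left _
  simp only [hshift, mul_sub, sum_sub_distrib, ← sum_mul] at hsummed
  linear_combination hsummed

/-- The coefficients are the elementary symmetric functions of the four products `rr'` of a root
`r` of `X² - pX + q` and a root `r'` of `X² - p'X + q'`. -/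
theorem mul_recurrence_of_recurrence {R : Type*} [CommRing R] {u v : ℕ → R} {p q p' q' : R}
    (hu : ∀ n, u (n + 2) = p * u (n + 1) - q * u n)
    (hv : ∀ n, v (n + 2) = p' * v (n + 1) - q' * v n) (n : ℕ) :
    u (n + 4) * v (n + 4) =
      p * p' * (u (n + 3) * v (n + 3)) - (p ^ 2 * q' + p' ^ 2 * q - 2 * q * q') *
        (u (n + 2) * v (n + 2)) + p * p' * q * q' * (u (n + 1) * v (n + 1)) -
        q ^ 2 * q' ^ 2 * (u n * v n) := by
  have hu4 : u (n + 4) = p * u (n + 3) - q * u (n + 2) := hu (n + 2)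
  have hv4 : v (n + 4) = p' * v (n + 3) - q' * v (n + 2) := hv (n + 2)
  have hu3 : u (n + 3) = p * u (n + 2) - q * u (n + 1) := hu (n + 1)
  have hv3 : v (n + 3) = p' * v (n + 2) - q' * v (n + 1) := hv (n + 1)
  rw [hu4, hv4, hu3, hv3, hu n, hv n]
  ring

theorem hSym_succ (n : ℕ) (α β : ℂ) : hSym (n + 1) α β = α * hSym n α β + β ^ (n + 1) := by
  rw [hSym, hSym, sum_range_succ', mul_sum]
  congr 1
  · exact sum_congr rfl fun i _ => by rw [Nat.succ_sub_succ]; ring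
  · simp

theorem hSym_zero (α β : ℂ) : hSym 0 α β = 1 := by simp [hSym]

theorem hSym_one (α β : ℂ) : hSym 1 α β = α + β := by simp [hSym, sum_range_succ]; ring

theorem hSym_add_two (n : ℕ) (α β : ℂ) :
    hSym (n + 2) α β = (α + β) * hSym (n + 1) α β - α * β * hSym n α β := by
  rw [hSym_succ (n + 1), hSym_succ n]
  ring

theorem hSym_mul_mul (n : ℕ) (x α β : ℂ) : hSym n (x * α) (x * β) = x ^ n * hSym n α β := by
  rw [hSym, hSym, mul_sum]
  refine sum_congr rfl fun i hi => ?_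
  rw [mul_pow, mul_pow, ← Nat.add_sub_cancel' (mem_range_succ_iff.1 hi)]
  simp only [pow_add, Nat.add_sub_cancel_left]
  ring

theorem tsum_hSym_mul_hSym_mul_prod (α β α' β' : ℂ)
    (hsum : Summable fun n => hSym n α β * hSym n α' β') :
    (∑' n, hSym n α β * hSym n α' β') *
        ((1 - α * α') * (1 - α * β') * (1 - β * α') * (1 - β * β')) =
      1 - α * β * α' * β' := by
  set p := α + β
  set q := α * β
  set p' := α' + β'
  set q' := α' * β'
  let E : LinearRecurrence ℂ :=
    ⟨4, ![-(q ^ 2 * q' ^ 2), p * p' * q * q', -(p ^ 2 * q' + p' ^ 2 * q - 2 * q * q'), p * p']⟩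
  have hE : E.IsSolution fun n => hSym n α β * hSym n α' β' := fun n => by
    simp only [E, Fin.sum_univ_four, Matrix.cons_val, Fin.coe_ofNat_eq_mod, Nat.reduceMod,
      add_zero]
    linear_combination mul_recurrence_of_recurrence (u := (hSym · α β)) (v := (hSym · α' β'))
      (hSym_add_two · α β) (hSym_add_two · α' β') n
  have key := E.one_sub_sum_coeffs_mul_tsum hE hsum
  have h2 (x y : ℂ) : hSym 2 x y = (x + y) ^ 2 - x * y := by
    rw [hSym_add_two 0, hSym_zero, hSym_one]; ring
  have h3 (x y : ℂ) : hSym 3 x y = (x + y) ^ 3 - 2 * x * y * (x + y) := by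
    rw [hSym_add_two 1, h2, hSym_one]; ring
  simp only [E, Fin.sum_univ_four, Matrix.cons_val, Fin.coe_ofNat_eq_mod, Nat.reduceMod,
    sum_range_succ, range_zero, sum_empty, hSym_zero, hSym_one, h2, h3] at key
  linear_combination key

theorem tsum_hSym_mul_hSym_mul_pow (α β α' β' x : ℂ)
    (hsum : Summable fun n => hSym n α β * hSym n α' β' * x ^ n)
    (hne : (1 - α * α' * x) * (1 - α * β' * x) * (1 - β * α' * x) * (1 - β * β' * x) ≠ 0) :
    ∑' n, hSym n α β * hSym n α' β' * x ^ n =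
      (1 - α * β * α' * β' * x ^ 2) *
        ((1 - α * α' * x) * (1 - α * β' * x) * (1 - β * α' * x) * (1 - β * β' * x))⁻¹ := by
  have hscale : (fun n => hSym n α β * hSym n α' β' * x ^ n) =
      fun n => hSym n (x * α) (x * β) * hSym n α' β' :=
    funext fun n => by rw [hSym_mul_mul]; ring
  rw [hscale] at hsum ⊢
  rw [eq_mul_inv_iff_mul_eq₀ hne]
  linear_combination tsum_hSym_mul_hSym_mul_prod _ _ _ _ hsum

theorem map_mul_of_coprime_of_map_zero {M : Type*} [MulZeroClass M] {g : ℕ → M} (h0 : g 0 = 0)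
    (hmul : ∀ m n : ℕ, 1 ≤ m → 1 ≤ n → m.Coprime n → g (m * n) = g m * g n) {m n : ℕ}
    (h : m.Coprime n) : g (m * n) = g m * g n := by
  rcases m.eq_zero_or_pos with rfl | hm
  · simp [h0]
  rcases n.eq_zero_or_pos with rfl | hn
  · simp [h0]
  exact hmul m n hm hn h

theorem one_sub_mul_natCast_cpow_ne_zero {q : ℕ} (hq : 0 < q) {s ρ : ℂ}
    (hρ : ‖ρ‖ < (q : ℝ) ^ s.re) : 1 - ρ * (q : ℂ) ^ (-s) ≠ 0 := by
  have hlt : ‖ρ * (q : ℂ) ^ (-s)‖ < 1 := by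
    rw [norm_mul, Complex.norm_natCast_cpow_of_pos hq, Complex.neg_re,
      Real.rpow_neg (Nat.cast_nonneg q), ← div_eq_mul_inv, div_lt_one (by positivity)]
    exact hρ
  refine sub_ne_zero.2 fun h => ?_
  simp [← h] at hlt

theorem tsum_mul_natCast_pow_cpow_eq {a b : ℕ → ℂ} {q : ℕ} {α β α' β' s : ℂ}
    (hA : ∀ n, a (q ^ n) = hSym n α β) (hB : ∀ n, b (q ^ n) = hSym n α' β')
    (hsum : Summable fun e => a (q ^ e) * b (q ^ e) * ((q ^ e : ℕ) : ℂ) ^ (-s))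
    (hne : (1 - α * α' * (q : ℂ) ^ (-s)) * (1 - α * β' * (q : ℂ) ^ (-s)) *
      (1 - β * α' * (q : ℂ) ^ (-s)) * (1 - β * β' * (q : ℂ) ^ (-s)) ≠ 0) :
    ∑' e, a (q ^ e) * b (q ^ e) * ((q ^ e : ℕ) : ℂ) ^ (-s) =
      (1 - α * β * α' * β' * (q : ℂ) ^ (-(2 * s))) *
        ((1 - α * α' * (q : ℂ) ^ (-s)) * (1 - α * β' * (q : ℂ) ^ (-s)) *
          (1 - β * α' * (q : ℂ) ^ (-s)) * (1 - β * β' * (q : ℂ) ^ (-s)))⁻¹ := by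
  have hterm (e : ℕ) : a (q ^ e) * b (q ^ e) * ((q ^ e : ℕ) : ℂ) ^ (-s) =
      hSym e α β * hSym e α' β' * ((q : ℂ) ^ (-s)) ^ e := by
    rw [hA, hB, Nat.cast_pow, ← Complex.natCast_cpow_natCast_mul, Complex.cpow_nat_mul]
  simp only [hterm] at hsum ⊢
  rw [tsum_hSym_mul_hSym_mul_pow _ _ _ _ _ hsum hne,
    show -(2 * s) = (2 : ℕ) * -s by push_cast; ring, Complex.cpow_nat_mul]

/-- The global Rankin–Selberg convolution factorization: for multiplicative sequences
`a`, `b` whose values at prime powers are given by `h_n` of fixed local parameters, and `s`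
in the region of absolute convergence dominating all local factors, the Dirichlet series
`∑ a(n)b(n)n^{-s}` equals the Euler product
`∏_q (1 - α_qβ_qα'_qβ'_q q^{-2s}) · [(1-α_qα'_q q^{-s})(1-α_qβ'_q q^{-s})(1-β_qα'_q q^{-s})(1-β_qβ'_q q^{-s})]⁻¹`,
each linear factor being nonzero and with the product over all primes converging. -/
theorem stmt_2 (a b : ℕ → ℂ) (ha0 : a 0 = 0) (hb0 : b 0 = 0) (ha1 : a 1 = 1) (hb1 : b 1 = 1)
    (haMul : ∀ m n : ℕ, 1 ≤ m → 1 ≤ n → Nat.Coprime m n → a (m * n) = a m * a n)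
    (hbMul : ∀ m n : ℕ, 1 ≤ m → 1 ≤ n → Nat.Coprime m n → b (m * n) = b m * b n)
    (α β α' β' : ℕ → ℂ)
    (hA : ∀ q : ℕ, q.Prime → ∀ n : ℕ, a (q ^ n) = hSym n (α q) (β q))
    (hB : ∀ q : ℕ, q.Prime → ∀ n : ℕ, b (q ^ n) = hSym n (α' q) (β' q))
    (s : ℂ)
    (hsum : Summable (fun n : ℕ => ‖a n * b n‖ * (n : ℝ) ^ (-s.re)))
    (hloc : ∀ q : ℕ, q.Prime →
      ‖α q * α' q‖ < (q : ℝ) ^ s.re ∧ ‖α q * β' q‖ < (q : ℝ) ^ s.re ∧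
      ‖β q * α' q‖ < (q : ℝ) ^ s.re ∧ ‖β q * β' q‖ < (q : ℝ) ^ s.re) :
    (∀ q : Nat.Primes,
      (1 - α q * α' q * (q : ℂ) ^ (-s)) ≠ 0 ∧ (1 - α q * β' q * (q : ℂ) ^ (-s)) ≠ 0 ∧
      (1 - β q * α' q * (q : ℂ) ^ (-s)) ≠ 0 ∧ (1 - β q * β' q * (q : ℂ) ^ (-s)) ≠ 0) ∧
    Multipliable (fun q : Nat.Primes =>
      (1 - α q * β q * α' q * β' q * (q : ℂ) ^ (-(2 * s))) *
        ((1 - α q * α' q * (q : ℂ) ^ (-s)) * (1 - α q * β' q * (q : ℂ) ^ (-s)) *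
          (1 - β q * α' q * (q : ℂ) ^ (-s)) * (1 - β q * β' q * (q : ℂ) ^ (-s)))⁻¹) ∧
    (∑' n : ℕ, a n * b n * (n : ℂ) ^ (-s)) =
      ∏' q : Nat.Primes,
        (1 - α q * β q * α' q * β' q * (q : ℂ) ^ (-(2 * s))) *
          ((1 - α q * α' q * (q : ℂ) ^ (-s)) * (1 - α q * β' q * (q : ℂ) ^ (-s)) *
            (1 - β q * α' q * (q : ℂ) ^ (-s)) * (1 - β q * β' q * (q : ℂ) ^ (-s)))⁻¹ := by
  have hne (q : Nat.Primes) :=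
    have ne {ρ : ℂ} := one_sub_mul_natCast_cpow_ne_zero (ρ := ρ) (s := s) q.2.pos
    (hloc q q.2).imp ne (And.imp ne (And.imp ne ne))
  set f : ℕ → ℂ := fun n => a n * b n * (n : ℂ) ^ (-s) with hf
  have hf_mul {m n : ℕ} (h : m.Coprime n) : f (m * n) = f m * f n := by
    simp only [f, map_mul_of_coprime_of_map_zero ha0 haMul h,
      map_mul_of_coprime_of_map_zero hb0 hbMul h, Nat.cast_mul, Complex.natCast_mul_natCast_cpow]
    ring
  have hf_norm : Summable fun n => ‖f n‖ := hsum.congr fun n => by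
    rcases n.eq_zero_or_pos with rfl | hn
    · simp [f, ha0]
    · rw [norm_mul (a n * b n), Complex.norm_natCast_cpow_of_pos hn, Complex.neg_re]
  have hlocal (q : Nat.Primes) :=
    have ⟨h₁, h₂, h₃, h₄⟩ := hne q
    tsum_mul_natCast_pow_cpow_eq (hA q q.2) (hB q q.2)
      (hf_norm.comp_injective (Nat.pow_right_injective q.2.two_le)).of_norm (by simp [*])
  have euler := EulerProduct.eulerProduct_hasProd (by simp [f, ha1, hb1]) hf_mul hf_norm
    (by simp [f, ha0])
  simp only [hf, hlocal] at euler
  exact ⟨hne, euler.multipliable, euler.tprod_eq.symm⟩
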